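/- Under Gaussian noise, the negative log generalized likelihood ratio equals -log G(x,a) = (1 - C(x,a)²)·‖x - x̄·𝟙‖₂²/(2σ²), where G(x,a) = sup_{α,β} p(x | θ = α·a + β·𝟙) / sup_t p(x | θ = t) with Gaussian likelihood of variance σ². -/

import Mathlib

/-!
Both likelihoods are decreasing functions of the residual sum of squares `∑ (x k - θ k)²`.
Without constraint it vanishes at `θ = x`. For `θ = α a + β` the best offset is
`β = x̄ - α ā`, which leaves the residual of the centred regression of `x` on `a`; completing
the square in `α` gives its minimum `Sxx - Sxa² / Saa = (1 - C²) Sxx`. Hence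
`G = exp (-(1 - C²) Sxx / (2σ²))`.
-/

open Finset Real

noncomputable def emean {N : ℕ} (x : Fin N → ℝ) : ℝ := (∑ k, x k) / N

noncomputable def ncorr {N : ℕ} (x a : Fin N → ℝ) : ℝ :=
  |∑ k, (x k - emean x) * (a k - emean a)| /
    Real.sqrt ((∑ k, (x k - emean x) ^ 2) * (∑ k, (a k - emean a) ^ 2))

noncomputable def gaussLik {N : ℕ} (σ : ℝ) (x θ : Fin N → ℝ) : ℝ :=
  ∏ k, (2 * Real.pi * σ ^ 2) ^ (-(1 : ℝ) / 2) *
    Real.exp (-(x k - θ k) ^ 2 / (2 * σ ^ 2))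

/-- The Gaussian generalized likelihood ratio with affine contrast change. -/
noncomputable def gaussGLR {N : ℕ} (σ : ℝ) (x a : Fin N → ℝ) : ℝ :=
  (⨆ α : ℝ, ⨆ β : ℝ, gaussLik σ x (fun k => α * a k + β)) /
    (⨆ t : Fin N → ℝ, gaussLik σ x t)

theorem Antitone.ciSup_comp_eq {ι : Sort*} {α β : Type*} [Preorder α]
    [ConditionallyCompleteLinearOrder β] [Nonempty ι] {g : α → β} (hg : Antitone g)
    {r : ι → α} {i₀ : ι} (hmin : ∀ i, r i₀ ≤ r i) : ⨆ i, g (r i) = g (r i₀) :=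
  ciSup_eq_of_forall_le_of_forall_lt_exists_gt (fun i => hg (hmin i)) fun _ hw => ⟨i₀, hw⟩

theorem antitone_mul_exp_neg_div {c d : ℝ} (hc : 0 ≤ c) (hd : 0 ≤ d) :
    Antitone fun s => c * exp (-s / d) :=
  fun _ _ hst => mul_le_mul_of_nonneg_left (exp_le_exp.2 (by gcongr)) hc

section

variable {N : ℕ}

theorem sum_sub_emean (x : Fin N → ℝ) : ∑ k, (x k - emean x) = 0 := by
  rcases N.eq_zero_or_pos with rfl | hN
  · simp
  · rw [sum_sub_distrib, sum_const, card_univ, Fintype.card_fin, nsmul_eq_mul, emean,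
      mul_div_cancel₀ _ (by positivity), sub_self]

noncomputable def rss (x a : Fin N → ℝ) (α : ℝ) : ℝ :=
  ∑ k, (x k - emean x - α * (a k - emean a)) ^ 2

theorem sum_sq_sub_affine (x a : Fin N → ℝ) (α β : ℝ) :
    ∑ k, (x k - (α * a k + β)) ^ 2 = rss x a α + N * (emean x - α * emean a - β) ^ 2 := by
  set c := emean x - α * emean a - β
  have hk : ∀ k, (x k - (α * a k + β)) ^ 2 = (x k - emean x - α * (a k - emean a)) ^ 2
      + c ^ 2 + 2 * c * (x k - emean x) - 2 * c * α * (a k - emean a) := fun k => by ring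
  rw [sum_congr rfl fun k _ => hk k, sum_sub_distrib, sum_add_distrib, sum_add_distrib,
    ← mul_sum, ← mul_sum, sum_sub_emean, sum_sub_emean, sum_const, card_univ, Fintype.card_fin,
    nsmul_eq_mul, rss]
  ring

theorem rss_eq (x a : Fin N → ℝ) (α : ℝ) :
    rss x a α = ∑ k, (x k - emean x) ^ 2 - 2 * α * ∑ k, (x k - emean x) * (a k - emean a)
      + α ^ 2 * ∑ k, (a k - emean a) ^ 2 := by
  have hk : ∀ k, (x k - emean x - α * (a k - emean a)) ^ 2 = (x k - emean x) ^ 2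
      - 2 * α * ((x k - emean x) * (a k - emean a)) + α ^ 2 * (a k - emean a) ^ 2 :=
    fun k => by ring
  simp only [rss, hk, sum_add_distrib, sum_sub_distrib, ← mul_sum]

noncomputable def olsSlope (x a : Fin N → ℝ) : ℝ :=
  (∑ k, (x k - emean x) * (a k - emean a)) / ∑ k, (a k - emean a) ^ 2

theorem rss_eq_rss_olsSlope_add (x a : Fin N → ℝ) (ha : ∑ k, (a k - emean a) ^ 2 ≠ 0)
    (α : ℝ) :
    rss x a α =
      rss x a (olsSlope x a) + (∑ k, (a k - emean a) ^ 2) * (α - olsSlope x a) ^ 2 := by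
  rw [rss_eq, rss_eq, olsSlope]
  field_simp
  ring

theorem rss_olsSlope (x a : Fin N → ℝ) (hx : ∑ k, (x k - emean x) ^ 2 ≠ 0)
    (ha : ∑ k, (a k - emean a) ^ 2 ≠ 0) :
    rss x a (olsSlope x a) = (1 - ncorr x a ^ 2) * ∑ k, (x k - emean x) ^ 2 := by
  rw [ncorr, div_pow, sq_abs, sq_sqrt (by positivity), rss_eq, olsSlope]
  field_simp
  ring

theorem gaussLik_eq_gaussLik_self_mul_exp (σ : ℝ) (x θ : Fin N → ℝ) :
    gaussLik σ x θ = gaussLik σ x x * exp (-(∑ k, (x k - θ k) ^ 2) / (2 * σ ^ 2)) := by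
  simp only [gaussLik, prod_mul_distrib, ← exp_sum, sub_self, ← sum_div, ← sum_neg_distrib]
  simp

theorem gaussLik_pos {σ : ℝ} (hσ : σ ≠ 0) (x θ : Fin N → ℝ) : 0 < gaussLik σ x θ := by
  unfold gaussLik
  positivity

theorem antitone_gaussLik_self_mul_exp (σ : ℝ) (x : Fin N → ℝ) :
    Antitone fun s => gaussLik σ x x * exp (-s / (2 * σ ^ 2)) :=
  antitone_mul_exp_neg_div (by unfold gaussLik; positivity) (by positivity)

theorem iSup_gaussLik (σ : ℝ) (x : Fin N → ℝ) :
    ⨆ θ, gaussLik σ x θ = gaussLik σ x x := by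
  rw [iSup_congr (gaussLik_eq_gaussLik_self_mul_exp σ x),
    (antitone_gaussLik_self_mul_exp σ x).ciSup_comp_eq (i₀ := x) fun θ => by
      simpa using sum_nonneg fun k _ => sq_nonneg (x k - θ k)]
  simp

theorem iSup_gaussLik_affine (σ : ℝ) (x a : Fin N → ℝ) (α : ℝ) :
    ⨆ β : ℝ, gaussLik σ x (fun k => α * a k + β)
      = gaussLik σ x x * exp (-rss x a α / (2 * σ ^ 2)) := by
  have hmin : ∀ β, rss x a α ≤ ∑ k, (x k - (α * a k + β)) ^ 2 := fun β => by
    rw [sum_sq_sub_affine]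
    exact le_add_of_nonneg_right (by positivity)
  have hβ₀ : ∑ k, (x k - (α * a k + (emean x - α * emean a))) ^ 2 = rss x a α := by
    rw [sum_sq_sub_affine, sub_self, zero_pow two_ne_zero, mul_zero, add_zero]
  rw [iSup_congr fun β => gaussLik_eq_gaussLik_self_mul_exp σ x _,
    (antitone_gaussLik_self_mul_exp σ x).ciSup_comp_eq (i₀ := emean x - α * emean a)
      fun β => hβ₀ ▸ hmin β, hβ₀]

theorem iSup_iSup_gaussLik_affine (σ : ℝ) (x a : Fin N → ℝ)
    (ha : ∑ k, (a k - emean a) ^ 2 ≠ 0) :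
    ⨆ α : ℝ, ⨆ β : ℝ, gaussLik σ x (fun k => α * a k + β)
      = gaussLik σ x x * exp (-rss x a (olsSlope x a) / (2 * σ ^ 2)) :=
  (iSup_congr (iSup_gaussLik_affine σ x a)).trans <|
    (antitone_gaussLik_self_mul_exp σ x).ciSup_comp_eq fun α => by
      rw [rss_eq_rss_olsSlope_add x a ha α]
      exact le_add_of_nonneg_right (by positivity)

theorem gaussGLR_eq_exp {σ : ℝ} (hσ : σ ≠ 0) (x a : Fin N → ℝ)
    (ha : ∑ k, (a k - emean a) ^ 2 ≠ 0) :
    gaussGLR σ x a = exp (-rss x a (olsSlope x a) / (2 * σ ^ 2)) := by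
  rw [gaussGLR, iSup_iSup_gaussLik_affine σ x a ha, iSup_gaussLik,
    mul_div_cancel_left₀ _ (gaussLik_pos hσ x x).ne']

end

theorem neg_log_gauss_glr {N : ℕ} (σ : ℝ) (hσ : 0 < σ) (x a : Fin N → ℝ)
    (hx : 0 < ∑ k, (x k - emean x) ^ 2)
    (ha : 0 < ∑ k, (a k - emean a) ^ 2) :
    -Real.log (gaussGLR σ x a) =
      (1 - ncorr x a ^ 2) * (∑ k, (x k - emean x) ^ 2) / (2 * σ ^ 2) := by
  rw [gaussGLR_eq_exp hσ.ne' x a ha.ne', log_exp, rss_olsSlope x a hx.ne' ha.ne', neg_div,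
    neg_neg]
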